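/- Let P be a reflexive polyhedron in M_ℝ and P⁺ ⊆ M_ℝ × ℝ the cone generated by {(m,1) : m ∈ P}. Then P⁺ is a strongly convex rational polyhedral cone, and its dual cone equals (P°)⁺, the cone generated by {(n,1) : n ∈ P°}, under the pairing ⟨(n,k),(m,l)⟩ = ⟨n,m⟩ + kl. -/

import Mathlib

open Finset

/-- The standard pairing between `ℝⁿ` and its dual (identified with `ℝⁿ`). -/
def pairR {n : ℕ} (x y : Fin n → ℝ) : ℝ := ∑ i, x i * y i

/-- A point of `M_ℝ = ℝⁿ` is integral if it lies in the lattice `M = ℤⁿ`. -/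
def IsIntegralPt {n : ℕ} (x : Fin n → ℝ) : Prop := ∀ i, ∃ z : ℤ, x i = (z : ℝ)

/-- The polar `P° = {x | ⟨x,y⟩ ≥ -1 for all y ∈ P}`. -/
def polarSet {n : ℕ} (P : Set (Fin n → ℝ)) : Set (Fin n → ℝ) :=
  {x | ∀ y ∈ P, -1 ≤ pairR x y}

/-- An integral (lattice) polytope: the convex hull of finitely many lattice points. -/
def IsLatticePolytope {n : ℕ} (P : Set (Fin n → ℝ)) : Prop :=
  ∃ S : Finset (Fin n → ℝ), (∀ x ∈ S, IsIntegralPt x) ∧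
    P = convexHull ℝ (S : Set (Fin n → ℝ))

/-- `{y | ⟨u,y⟩ = c}` is a supporting hyperplane of `P` cutting out a
codimension-one face. -/
def IsCodimOneSupport {n : ℕ} (P : Set (Fin n → ℝ)) (u : Fin n → ℝ) (c : ℝ) : Prop :=
  u ≠ 0 ∧ (∀ y ∈ P, c ≤ pairR u y) ∧
  Module.finrank ℝ (affineSpan ℝ {y ∈ P | pairR u y = c}).direction = n - 1

/-- A reflexive polytope: an integral polytope with `0` in its interior all of whose
codimension-one supporting hyperplanes have the form `{y | ⟨ℓ,y⟩ = -1}` with `ℓ`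
in the dual lattice. -/
def IsReflexive {n : ℕ} (P : Set (Fin n → ℝ)) : Prop :=
  IsLatticePolytope P ∧ (0 : Fin n → ℝ) ∈ interior P ∧
  ∀ u : Fin n → ℝ, ∀ c : ℝ, IsCodimOneSupport P u c →
    ∃ ℓ : Fin n → ℤ, {y : Fin n → ℝ | pairR u y = c} =
      {y : Fin n → ℝ | pairR (fun i => (ℓ i : ℝ)) y = -1}


/-- The pairing on `M⁺_ℝ = ℝⁿ × ℝ`, `⟨(n,k),(m,l)⟩ = ⟨n,m⟩ + k·l`. -/
def pairPlus {n : ℕ} (x y : (Fin n → ℝ) × ℝ) : ℝ := pairR x.1 y.1 + x.2 * y.2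

/-- The cone `Q⁺ ⊆ M_ℝ × ℝ` generated by `Q × {1}`. -/
def coneOver {n : ℕ} (Q : Set (Fin n → ℝ)) : Set ((Fin n → ℝ) × ℝ) :=
  {x | ∃ t : ℝ, 0 ≤ t ∧ ∃ m ∈ Q, x = t • ((m, 1) : (Fin n → ℝ) × ℝ)}

/-!
The cone `Q⁺` over a convex set `Q` is closed under sums and nonnegative multiples, and the last
coordinate `t` of `t • (m, 1)` shows that it is pointed. Over a lattice polytope `conv S` it is
generated by the lattice points `(s, 1)`, `s ∈ S`. For duality, `(u, k)` pairs nonnegatively with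
`Q⁺` iff `⟨u, m⟩ + k ≥ 0` on `Q`; evaluating at `0 ∈ Q` gives `k ≥ 0`, and for `k > 0` this says
`u / k ∈ Q°`, while for `k = 0` a linear form nonnegative on a neighbourhood of `0` must vanish.
-/

open Filter Topology

section

variable {n : ℕ} {Q : Set (Fin n → ℝ)} {x y : (Fin n → ℝ) × ℝ}

lemma pairR_eq_dotProduct (v w : Fin n → ℝ) : pairR v w = v ⬝ᵥ w := rfl

lemma zero_mem_polarSet (Q : Set (Fin n → ℝ)) : (0 : Fin n → ℝ) ∈ polarSet Q := fun y _ => by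
  simp [pairR_eq_dotProduct]

lemma eq_zero_of_forall_pairR_nonneg (h0 : (0 : Fin n → ℝ) ∈ interior Q)
    {u : Fin n → ℝ} (hu : ∀ m ∈ Q, 0 ≤ pairR u m) : u = 0 := by
  have hsmul : Tendsto (fun t : ℝ => t • (-u)) (𝓝 0) (𝓝 0) := by
    simpa using (show Continuous fun t : ℝ => t • (-u) by fun_prop).tendsto 0
  have hev : ∀ᶠ t in 𝓝[>] (0 : ℝ), t • (-u) ∈ Q :=
    (hsmul.eventually (mem_interior_iff_mem_nhds.mp h0)).filter_mono nhdsWithin_le_nhds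
  obtain ⟨t, htQ, ht⟩ := (hev.and self_mem_nhdsWithin).exists
  have hneg : 0 ≤ -(t * (u ⬝ᵥ u)) := by
    simpa [pairR_eq_dotProduct, dotProduct_smul] using hu _ htQ
  have hnonneg : 0 ≤ u ⬝ᵥ u := Finset.sum_nonneg fun i _ => mul_self_nonneg (u i)
  have ht : 0 < t := ht
  exact dotProduct_self_eq_zero.mp (le_antisymm (by nlinarith) hnonneg)

lemma smul_mk_one_mem_coneOver {t : ℝ} (ht : 0 ≤ t) {m : Fin n → ℝ} (hm : m ∈ Q) :
    t • ((m, 1) : (Fin n → ℝ) × ℝ) ∈ coneOver Q :=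
  ⟨t, ht, m, hm, rfl⟩

lemma zero_mem_coneOver (hQ : Q.Nonempty) : (0 : (Fin n → ℝ) × ℝ) ∈ coneOver Q := by
  obtain ⟨m, hm⟩ := hQ
  simpa using smul_mk_one_mem_coneOver le_rfl hm

lemma snd_nonneg_of_mem_coneOver (hx : x ∈ coneOver Q) : 0 ≤ x.2 := by
  obtain ⟨t, ht, m, -, rfl⟩ := hx
  simpa using ht

lemma eq_zero_of_mem_coneOver_of_snd_eq_zero (hx : x ∈ coneOver Q) (h : x.2 = 0) : x = 0 := by
  obtain ⟨t, -, m, -, rfl⟩ := hx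
  obtain rfl : t = 0 := by simpa using h
  exact zero_smul ℝ _

lemma smul_mem_coneOver (hx : x ∈ coneOver Q) {s : ℝ} (hs : 0 ≤ s) : s • x ∈ coneOver Q := by
  obtain ⟨t, ht, m, hm, rfl⟩ := hx
  simpa [smul_smul] using smul_mk_one_mem_coneOver (mul_nonneg hs ht) hm

lemma add_mem_coneOver (hQ : Convex ℝ Q) (hx : x ∈ coneOver Q) (hy : y ∈ coneOver Q) :
    x + y ∈ coneOver Q := by
  obtain ⟨t, ht, m, hm, rfl⟩ := hx
  obtain ⟨s, hs, m', hm', rfl⟩ := hy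
  rcases (add_nonneg ht hs).eq_or_lt with hts | hts
  · obtain ⟨rfl, rfl⟩ : t = 0 ∧ s = 0 := ⟨by linarith, by linarith⟩
    simpa using smul_mk_one_mem_coneOver le_rfl hm
  -- `t (m, 1) + s (m', 1) = (t + s) (m'', 1)` with `m''` the weighted average of `m` and `m'`
  refine ⟨t + s, hts.le, (t / (t + s)) • m + (s / (t + s)) • m',
    convex_iff_div.mp hQ hm hm' ht hs hts, ?_⟩
  ext <;> simp [smul_smul, mul_div_cancel₀ _ hts.ne']

theorem convex_coneOver (hQ : Convex ℝ Q) : Convex ℝ (coneOver Q) :=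
  fun _ hx _ hy _ _ ha hb _ =>
    add_mem_coneOver hQ (smul_mem_coneOver hx ha) (smul_mem_coneOver hy hb)

theorem coneOver_inter_neg_eq_zero (hQ : Q.Nonempty) :
    {x | x ∈ coneOver Q ∧ -x ∈ coneOver Q} = {(0 : (Fin n → ℝ) × ℝ)} := by
  ext x
  refine ⟨fun ⟨hx, hnx⟩ => eq_zero_of_mem_coneOver_of_snd_eq_zero hx ?_, ?_⟩
  · have hsnd := snd_nonneg_of_mem_coneOver hx
    have hsnd_neg := snd_nonneg_of_mem_coneOver hnx
    rw [Prod.snd_neg] at hsnd_neg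
    linarith
  · rintro rfl
    exact ⟨zero_mem_coneOver hQ, by simpa using zero_mem_coneOver hQ⟩

lemma sum_smul_mk_one (S : Finset (Fin n → ℝ)) (c : (Fin n → ℝ) → ℝ) :
    ∑ m ∈ S, c m • ((m, 1) : (Fin n → ℝ) × ℝ) = (∑ m ∈ S, c m • m, ∑ m ∈ S, c m) := by
  ext <;> simp [Prod.fst_sum, Prod.snd_sum]

theorem coneOver_convexHull (S : Finset (Fin n → ℝ)) (hS : S.Nonempty) :
    coneOver (convexHull ℝ (S : Set (Fin n → ℝ))) =
      {x | ∃ c : (Fin n → ℝ) → ℝ, (∀ m, 0 ≤ c m) ∧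
        x = ∑ m ∈ S, c m • ((m, 1) : (Fin n → ℝ) × ℝ)} := by
  ext x
  constructor
  · rintro ⟨t, ht, m, hm, rfl⟩
    obtain ⟨w, hw₀, hw₁, rfl⟩ := Finset.mem_convexHull'.mp hm
    -- `w` is only nonnegative on `S`; clip it to get a globally nonnegative coefficient
    refine ⟨fun m => t * max (w m) 0, fun m => mul_nonneg ht (le_max_right _ _), ?_⟩
    have hclip : ∀ m ∈ S, t * max (w m) 0 = t * w m := fun m hm => by rw [max_eq_left (hw₀ m hm)]
    rw [sum_smul_mk_one]
    refine Prod.ext ?_ ?_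
    · simp only [Prod.smul_fst, Finset.smul_sum, smul_smul]
      exact Finset.sum_congr rfl fun m hm => by rw [hclip m hm]
    · simp [Finset.sum_congr rfl hclip, ← Finset.mul_sum, hw₁]
  · rintro ⟨c, hc, rfl⟩
    rw [sum_smul_mk_one]
    have hT : 0 ≤ ∑ m ∈ S, c m := Finset.sum_nonneg fun m _ => hc m
    rcases hT.eq_or_lt with hT | hT
    · have hzero : ∀ m ∈ S, c m = 0 := (Finset.sum_eq_zero_iff_of_nonneg fun m _ => hc m).mp hT.symm
      have hsum : ∑ m ∈ S, c m • m = 0 :=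
        Finset.sum_eq_zero fun m hm => by rw [hzero m hm, zero_smul]
      rw [hsum, ← hT]
      exact zero_mem_coneOver (hS.to_set.mono (subset_convexHull ℝ _))
    · refine ⟨∑ m ∈ S, c m, hT.le, S.centerMass c id,
        S.centerMass_mem_convexHull (fun m _ => hc m) hT fun m hm => hm, ?_⟩
      ext <;> simp [Finset.centerMass, smul_smul, mul_inv_cancel₀ hT.ne']

theorem IsLatticePolytope.convex {P : Set (Fin n → ℝ)} (hP : IsLatticePolytope P) :
    Convex ℝ P := by
  obtain ⟨S, -, rfl⟩ := hP
  exact convex_convexHull ℝ _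

def castPlus (g : (Fin n → ℤ) × ℤ) : (Fin n → ℝ) × ℝ := (fun i => (g.1 i : ℝ), (g.2 : ℝ))

noncomputable def liftPlus (m : Fin n → ℝ) : (Fin n → ℤ) × ℤ := (fun i => ⌊m i⌋, 1)

lemma castPlus_liftPlus {m : Fin n → ℝ} (hm : IsIntegralPt m) : castPlus (liftPlus m) = (m, 1) := by
  refine Prod.ext (funext fun i => ?_) (by simp [castPlus, liftPlus])
  obtain ⟨z, hz⟩ := hm i
  simp [castPlus, liftPlus, hz]

lemma sum_image_liftPlus (S : Finset (Fin n → ℝ)) (hS : ∀ m ∈ S, IsIntegralPt m)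
    (c : (Fin n → ℤ) × ℤ → ℝ) :
    ∑ g ∈ S.image liftPlus, c g • castPlus g =
      ∑ m ∈ S, c (liftPlus m) • ((m, 1) : (Fin n → ℝ) × ℝ) := by
  have hinj : Set.InjOn liftPlus (S : Set (Fin n → ℝ)) := fun a ha b hb h => by
    simpa [castPlus_liftPlus (hS a ha), castPlus_liftPlus (hS b hb)] using congrArg castPlus h
  rw [Finset.sum_image hinj]
  exact Finset.sum_congr rfl fun m hm => by rw [castPlus_liftPlus (hS m hm)]

theorem IsLatticePolytope.exists_finset_coneOver_eq {P : Set (Fin n → ℝ)}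
    (hP : IsLatticePolytope P) (hne : P.Nonempty) :
    ∃ G : Finset ((Fin n → ℤ) × ℤ),
      coneOver P = {x | ∃ c : (Fin n → ℤ) × ℤ → ℝ, (∀ g, 0 ≤ c g) ∧
        x = ∑ g ∈ G, c g • castPlus g} := by
  obtain ⟨S, hS, rfl⟩ := hP
  have hSne : S.Nonempty := Finset.coe_nonempty.mp (convexHull_nonempty_iff.mp hne)
  refine ⟨S.image liftPlus, ?_⟩
  ext x
  simp only [coneOver_convexHull S hSne, sum_image_liftPlus S hS, Set.mem_ofPred_eq]
  constructor
  · rintro ⟨c, hc, rfl⟩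
    exact ⟨fun g => c (castPlus g).1, fun g => hc _,
      Finset.sum_congr rfl fun m hm => by simp only [castPlus_liftPlus (hS m hm)]⟩
  · rintro ⟨c, hc, rfl⟩
    exact ⟨c ∘ liftPlus, fun m => hc _, rfl⟩

lemma pairPlus_smul_mk_one (t : ℝ) (m : Fin n → ℝ) :
    pairPlus x (t • ((m, 1) : (Fin n → ℝ) × ℝ)) = t * (pairR x.1 m + x.2) := by
  simp only [pairPlus, pairR_eq_dotProduct, Prod.smul_mk, dotProduct_smul, smul_eq_mul]
  ring

theorem dual_coneOver_eq_coneOver_polarSet (h0 : (0 : Fin n → ℝ) ∈ interior Q) :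
    {x : (Fin n → ℝ) × ℝ | ∀ y ∈ coneOver Q, 0 ≤ pairPlus x y} = coneOver (polarSet Q) := by
  ext x
  constructor
  · obtain ⟨u, k⟩ := x
    intro hx
    have hQ : ∀ m ∈ Q, 0 ≤ pairR u m + k := fun m hm => by
      have h := hx _ (smul_mk_one_mem_coneOver zero_le_one hm)
      rwa [pairPlus_smul_mk_one, one_mul] at h
    have hk : 0 ≤ k := by simpa [pairR_eq_dotProduct] using hQ 0 (interior_subset h0)
    rcases hk.eq_or_lt with rfl | hk
    · obtain rfl : u = 0 := eq_zero_of_forall_pairR_nonneg h0 fun m hm => by simpa using hQ m hm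
      exact zero_mem_coneOver ⟨0, zero_mem_polarSet Q⟩
    · refine ⟨k, hk.le, k⁻¹ • u, fun m hm => ?_, ?_⟩
      · rw [pairR_eq_dotProduct, smul_dotProduct, smul_eq_mul, le_inv_mul_iff₀ hk]
        linarith [hQ m hm, pairR_eq_dotProduct u m]
      · simp [smul_smul, mul_inv_cancel₀ hk.ne']
  · rintro ⟨t, ht, u, hu, rfl⟩ y ⟨s, hs, m, hm, rfl⟩
    rw [pairPlus_smul_mk_one]
    refine mul_nonneg hs ?_
    simp only [pairR_eq_dotProduct, Prod.smul_mk, smul_dotProduct, smul_eq_mul, mul_one]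
    nlinarith [mul_le_mul_of_nonneg_left (hu m hm) ht, pairR_eq_dotProduct u m]

end

/-- For a reflexive polytope `P`, the cone `P⁺` over `P × {1}` is a
strongly convex rational polyhedral cone, and its dual cone equals `(P°)⁺` under the
pairing `⟨(n,k),(m,l)⟩ = ⟨n,m⟩ + kl`. -/
theorem cone_over_reflexive {n : ℕ} (P : Set (Fin n → ℝ)) (hP : IsReflexive P) :
    Convex ℝ (coneOver P) ∧
    {x | x ∈ coneOver P ∧ -x ∈ coneOver P} = {(0 : (Fin n → ℝ) × ℝ)} ∧
    (∃ G : Finset ((Fin n → ℤ) × ℤ), coneOver P =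
      {x | ∃ c : ((Fin n → ℤ) × ℤ) → ℝ, (∀ g, 0 ≤ c g) ∧
        x = ∑ g ∈ G, c g • (((fun i => ((g.1 i : ℝ))), (g.2 : ℝ)) : (Fin n → ℝ) × ℝ)}) ∧
    {x : (Fin n → ℝ) × ℝ | ∀ y ∈ coneOver P, 0 ≤ pairPlus x y} = coneOver (polarSet P)
    := by
  obtain ⟨hlat, h0, -⟩ := hP
  have hne : P.Nonempty := ⟨0, interior_subset h0⟩
  exact ⟨convex_coneOver hlat.convex, coneOver_inter_neg_eq_zero hne,
    hlat.exists_finset_coneOver_eq hne, dual_coneOver_eq_coneOver_polarSet h0⟩
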